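/- For any density matrix ρ and any orthogonal projection Π, F(ΠρΠ, σ) = F(ρ, σ) whenever Π is the projection onto the image (support) of σ. -/

import Mathlib

/-!
As `Π` is idempotent with the same range as `σ`, `Πσ = σ`. Since `√x = x · g(x)` with
`g(x) = √x / x` (also at `x = 0`, where `0 / 0 = 0`), `√σ = σ g(σ)`; hence `Π√σ = √σ = √σΠ`
and `√σ (ΠρΠ) √σ = √σ ρ √σ`. It remains to see that `Tr √(√ρ σ √ρ) = Tr √(√σ ρ √σ)`: with
`X = √σ √ρ` these are the traces of `√(XᴴX)` and `√(XXᴴ)`, and `XᴴX`, `XXᴴ` have the same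
characteristic polynomial, hence the same eigenvalues.
-/

open Matrix Kronecker BigOperators
open scoped ComplexOrder

noncomputable section

namespace QCAE

variable {α β γ n : Type*}

open scoped Classical

/-- Matrix square root of a positive semidefinite matrix (junk value `0` otherwise). -/
noncomputable def msqrt [Fintype n] [DecidableEq n] (A : Matrix n n ℂ) : Matrix n n ℂ :=
  if h : A.PosSemidef then
    (h.1.eigenvectorUnitary : Matrix n n ℂ) * diagonal ((↑) ∘ Real.sqrt ∘ h.1.eigenvalues) *
      star (h.1.eigenvectorUnitary : Matrix n n ℂ) else 0

/-- Trace norm `‖A‖₁ = Tr √(AᴴA)`. -/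
noncomputable def traceNorm [Fintype n] [DecidableEq n] (A : Matrix n n ℂ) : ℝ :=
  (msqrt (Aᴴ * A)).trace.re

/-- Fidelity `F(ρ,σ) = (Tr √(√ρ σ √ρ))²`. -/
noncomputable def fidelity [Fintype n] [DecidableEq n] (ρ σ : Matrix n n ℂ) : ℝ :=
  ((msqrt (msqrt ρ * σ * msqrt ρ)).trace.re) ^ 2

/-- A density matrix: positive semidefinite with trace one. -/
def IsDensity [Fintype n] [DecidableEq n] (ρ : Matrix n n ℂ) : Prop :=
  ρ.PosSemidef ∧ ρ.trace = 1

/-- Sum of the `r` largest values of `v`. -/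
noncomputable def sumLargest [Fintype n] (v : n → ℝ) (r : ℕ) : ℝ :=
  ((((Finset.univ : Finset n).val.map v).sort (· ≤ ·)).reverse.take r).sum

/-- Partial trace over the first tensor factor. -/
def ptraceFst [Fintype α] (M : Matrix (α × β) (α × β) ℂ) : Matrix β β ℂ :=
  fun i j => ∑ k, M (k, i) (k, j)

/-- Partial trace over the second tensor factor. -/
def ptraceSnd [Fintype β] (M : Matrix (α × β) (α × β) ℂ) : Matrix α α ℂ :=
  fun i j => ∑ k, M (i, k) (j, k)

/-- Apply a map to the first tensor factor (`𝓔 ⊗ id`). -/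
def applyFst (𝓔 : Matrix α α ℂ → Matrix β β ℂ) (M : Matrix (α × γ) (α × γ) ℂ) :
    Matrix (β × γ) (β × γ) ℂ :=
  fun p q => 𝓔 (fun a b => M (a, p.2) (b, q.2)) p.1 q.1

/-- Apply a map to the second tensor factor (`id ⊗ 𝓔`). -/
def applySnd (𝓔 : Matrix α α ℂ → Matrix β β ℂ) (M : Matrix (γ × α) (γ × α) ℂ) :
    Matrix (γ × β) (γ × β) ℂ :=
  fun p q => 𝓔 (fun a b => M (p.1, a) (q.1, b)) p.2 q.2

/-- Complete positivity: `id_N ⊗ 𝓔` preserves positive semidefiniteness for all `N`. -/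
def IsCP [Fintype α] [DecidableEq α] [Fintype β] [DecidableEq β]
    (𝓔 : Matrix α α ℂ → Matrix β β ℂ) : Prop :=
  ∀ (N : ℕ) (M : Matrix (Fin N × α) (Fin N × α) ℂ), M.PosSemidef → (applySnd 𝓔 M).PosSemidef

/-- Trace preservation. -/
def TracePreserving [Fintype α] [Fintype β] (𝓔 : Matrix α α ℂ → Matrix β β ℂ) : Prop :=
  ∀ M, (𝓔 M).trace = M.trace

/-- A quantum channel: a completely positive trace-preserving linear map. -/
def IsChannel [Fintype α] [DecidableEq α] [Fintype β] [DecidableEq β]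
    (𝓔 : Matrix α α ℂ →ₗ[ℂ] Matrix β β ℂ) : Prop :=
  IsCP (𝓔 ·) ∧ TracePreserving (𝓔 ·)

/-- The Choi state `J^𝓔 = (1/dim α) Σ_{i,j} |i⟩⟨j| ⊗ 𝓔(|i⟩⟨j|)` of a map. -/
noncomputable def choi [Fintype α] [DecidableEq α] (𝓔 : Matrix α α ℂ → Matrix β β ℂ) :
    Matrix (α × β) (α × β) ℂ :=
  ((Fintype.card α : ℂ))⁻¹ • ∑ i : α, ∑ j : α,
    (Matrix.single i j (1 : ℂ)) ⊗ₖ 𝓔 (Matrix.single i j (1 : ℂ))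

/-- The maximally entangled state `φ⁺ = (1/d) Σ_{i,j} |ii⟩⟨jj|`. -/
def phiPlus (d : ℕ) : Matrix (Fin d × Fin d) (Fin d × Fin d) ℂ :=
  fun p q => if p.1 = p.2 ∧ q.1 = q.2 then ((d : ℂ))⁻¹ else 0

section

variable [Fintype n] [DecidableEq n]

lemma mul_eq_self_of_range_le {R o : Type*} [CommRing R] [Fintype o] [DecidableEq o]
    {P : Matrix n n R} {A : Matrix n o R}
    (hP : IsIdempotentElem P) (h : LinearMap.range (toLin' A) ≤ LinearMap.range (toLin' P)) :
    P * A = A := by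
  refine toLin'.injective (LinearMap.ext fun x => ?_)
  obtain ⟨y, hy⟩ := h ⟨x, rfl⟩
  simp only [toLin'_apply] at hy ⊢
  rw [← mulVec_mulVec, ← hy, mulVec_mulVec, hP.eq]

lemma mul_cfc_eq_of_mul_eq {P A : Matrix n n ℂ} (hA : A.IsHermitian) (hPA : P * A = A)
    {f : ℝ → ℝ} (hf : f 0 = 0) : P * cfc f A = cfc f A := by
  have hfactor : cfc f A = A * cfc (fun x => f x / x) A := by
    have hfin := finite_real_spectrum (A := A)
    calc cfc f A = cfc (fun x => x * (f x / x)) A := cfc_congr fun x _ => by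
          rcases eq_or_ne x 0 with rfl | hx
          · simp [hf]
          · rw [mul_div_cancel₀ _ hx]
      _ = cfc (fun x => x) A * cfc (fun x => f x / x) A :=
          cfc_mul _ _ A (hfin.continuousOn _) (hfin.continuousOn _)
      _ = A * cfc (fun x => f x / x) A := by rw [cfc_id' ℝ A hA.isSelfAdjoint]
  rw [hfactor, ← Matrix.mul_assoc, hPA]

lemma isHermitian_cfc (f : ℝ → ℝ) (A : Matrix n n ℂ) : (cfc f A).IsHermitian :=
  cfc_predicate f A

lemma trace_cfc_eq_of_charpoly_eq {A B : Matrix n n ℂ} (hA : A.IsHermitian) (hB : B.IsHermitian)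
    (h : A.charpoly = B.charpoly) (f : ℝ → ℝ) : (cfc f A).trace = (cfc f B).trace := by
  rw [trace_eq_sum_roots_charpoly, trace_eq_sum_roots_charpoly, hA.charpoly_cfc_eq,
    hB.charpoly_cfc_eq, (hA.eigenvalues_eq_eigenvalues_iff hB).2 h]

lemma msqrt_eq_cfc {A : Matrix n n ℂ} (hA : A.PosSemidef) : msqrt A = cfc Real.sqrt A := by
  rw [msqrt, dif_pos hA, hA.1.cfc_eq, IsHermitian.cfc, Unitary.conjStarAlgAut_apply]
  rfl

lemma cfc_sqrt_mul_self {A : Matrix n n ℂ} (hA : A.PosSemidef) :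
    cfc Real.sqrt A * cfc Real.sqrt A = A := by
  have hspec : ∀ x ∈ spectrum ℝ A, 0 ≤ x := by
    rw [hA.1.spectrum_real_eq_range_eigenvalues]
    rintro - ⟨i, rfl⟩
    exact hA.eigenvalues_nonneg i
  rw [← cfc_mul .., cfc_congr (f := fun x => √x * √x) (g := fun x => x)
    fun x hx => Real.mul_self_sqrt (hspec x hx)]
  exact cfc_id' ℝ A hA.1

lemma trace_msqrt_conjTranspose_mul_self_comm (X : Matrix n n ℂ) :
    (msqrt (Xᴴ * X)).trace = (msqrt (X * Xᴴ)).trace := by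
  rw [msqrt_eq_cfc (posSemidef_conjTranspose_mul_self X),
    msqrt_eq_cfc (posSemidef_self_mul_conjTranspose X)]
  exact trace_cfc_eq_of_charpoly_eq (isHermitian_conjTranspose_mul_self X)
    (isHermitian_mul_conjTranspose_self X) (charpoly_mul_comm _ _) _

lemma trace_msqrt_sandwich_comm {A B : Matrix n n ℂ} (hA : A.PosSemidef) (hB : B.PosSemidef) :
    (msqrt (msqrt A * B * msqrt A)).trace = (msqrt (msqrt B * A * msqrt B)).trace := by
  set X := cfc Real.sqrt B * cfc Real.sqrt A
  have hXX : msqrt A * B * msqrt A = Xᴴ * X := by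
    rw [msqrt_eq_cfc hA, conjTranspose_mul, (isHermitian_cfc _ A).eq, (isHermitian_cfc _ B).eq]
    conv_lhs => rw [← cfc_sqrt_mul_self hB]
    simp only [X, Matrix.mul_assoc]
  have hXX' : msqrt B * A * msqrt B = X * Xᴴ := by
    rw [msqrt_eq_cfc hB, conjTranspose_mul, (isHermitian_cfc _ A).eq, (isHermitian_cfc _ B).eq]
    conv_lhs => rw [← cfc_sqrt_mul_self hA]
    simp only [X, Matrix.mul_assoc]
  rw [hXX, hXX', trace_msqrt_conjTranspose_mul_self_comm]

end

/-- `F(ΠρΠ, σ) = F(ρ, σ)` when `Π` projects onto the image of `σ`. -/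
theorem stmt2 {m : ℕ} (ρ σ P : Matrix (Fin m) (Fin m) ℂ)
    (hρ : IsDensity ρ) (hσ : IsDensity σ)
    (hProj : P * P = P) (hHerm : Pᴴ = P)
    (hRange : LinearMap.range (Matrix.toLin' P) = LinearMap.range (Matrix.toLin' σ)) :
    fidelity (P * ρ * P) σ = fidelity ρ σ := by
  obtain ⟨hρ, -⟩ := hρ
  obtain ⟨hσ, -⟩ := hσ
  have hPσ : P * σ = σ := mul_eq_self_of_range_le hProj hRange.ge
  have hPs : P * cfc Real.sqrt σ = cfc Real.sqrt σ := mul_cfc_eq_of_mul_eq hσ.1 hPσ Real.sqrt_zero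
  have hsP : cfc Real.sqrt σ * P = cfc Real.sqrt σ := by
    simpa only [conjTranspose_mul, hHerm, (isHermitian_cfc _ σ).eq] using congrArg conjTranspose hPs
  have hPρP : (P * ρ * P).PosSemidef := by
    simpa only [hHerm] using hρ.conjTranspose_mul_mul_same P
  have hsandwich : msqrt σ * (P * ρ * P) * msqrt σ = msqrt σ * ρ * msqrt σ := by
    rw [msqrt_eq_cfc hσ]
    calc cfc Real.sqrt σ * (P * ρ * P) * cfc Real.sqrt σ
        = (cfc Real.sqrt σ * P) * ρ * (P * cfc Real.sqrt σ) := by simp only [Matrix.mul_assoc]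
      _ = cfc Real.sqrt σ * ρ * cfc Real.sqrt σ := by rw [hsP, hPs]
  rw [fidelity, fidelity, trace_msqrt_sandwich_comm hPρP hσ, trace_msqrt_sandwich_comm hρ hσ,
    hsandwich]

end QCAE
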